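/- Arbitrary positive announcements have the McKinsey property on S5: for every φ ∈ L_PAPAL, the formula □⁺◊⁺φ → ◊⁺□⁺φ is valid on S5. -/
import Mathlib


/-- An epistemic (S5) model: a nonempty set of states, an equivalence
relation for each agent, and a valuation of atoms. -/
structure EpiModel (A P : Type) where
  S : Type
  ne : Nonempty S
  rel : A → S → S → Prop
  equiv : ∀ a, Equivalence (rel a)
  val : P → Set S

/-- Positive formulas L_EL⁺ : p | ¬p | ∧ | ∨ | K_a. -/
inductive PosForm (A P : Type) where
  | atom : P → PosForm A P
  | natom : P → PosForm A P
  | and : PosForm A P → PosForm A P → PosForm A P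
  | or : PosForm A P → PosForm A P → PosForm A P
  | know : A → PosForm A P → PosForm A P

/-- Satisfaction of a positive formula, relativized to a current domain `D`
(representing the submodel of `M` induced by `D`). -/
def PosForm.sat {A P : Type} (M : EpiModel A P) : PosForm A P → Set M.S → M.S → Prop
  | .atom p, _, s => s ∈ M.val p
  | .natom p, _, s => s ∉ M.val p
  | .and φ ψ, D, s => PosForm.sat M φ D s ∧ PosForm.sat M ψ D s
  | .or φ ψ, D, s => PosForm.sat M φ D s ∨ PosForm.sat M ψ D s
  | .know a φ, D, s => ∀ t, M.rel a s t → t ∈ D → PosForm.sat M φ D t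

/-- The language L_PAPAL : atoms, ¬, ∧, K_a, announcements [ψ]φ and the
positive arbitrary-announcement quantifier □⁺. -/
inductive Form (A P : Type) where
  | atom : P → Form A P
  | neg : Form A P → Form A P
  | and : Form A P → Form A P → Form A P
  | know : A → Form A P → Form A P
  | ann : Form A P → Form A P → Form A P
  | pbox : Form A P → Form A P

/-- Satisfaction, relativized to a current domain `D`: `Form.sat M φ D s`
means that φ holds at state `s` of the restriction of `M` to `D`.
Announcement `[ψ]φ` further restricts the domain to the states of `D`
satisfying ψ; `□⁺φ` quantifies over announcements of positive formulas. -/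
def Form.sat {A P : Type} (M : EpiModel A P) : Form A P → Set M.S → M.S → Prop
  | .atom p, _, s => s ∈ M.val p
  | .neg φ, D, s => ¬ Form.sat M φ D s
  | .and φ ψ, D, s => Form.sat M φ D s ∧ Form.sat M ψ D s
  | .know a φ, D, s => ∀ t, M.rel a s t → t ∈ D → Form.sat M φ D t
  | .ann ψ φ, D, s => Form.sat M ψ D s → Form.sat M φ {t | t ∈ D ∧ Form.sat M ψ D t} s
  | .pbox φ, D, s => ∀ χ : PosForm A P, PosForm.sat M χ D s →
      Form.sat M φ {t | t ∈ D ∧ PosForm.sat M χ D t} s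

/-- Truth at a pointed model `M_s`. -/
def Sat {A P : Type} (M : EpiModel A P) (s : M.S) (φ : Form A P) : Prop :=
  Form.sat M φ Set.univ s

def Form.or {A P : Type} (φ ψ : Form A P) : Form A P := .neg (.and (.neg φ) (.neg ψ))
def Form.imp {A P : Type} (φ ψ : Form A P) : Form A P := Form.or (.neg φ) ψ
def Form.iff {A P : Type} (φ ψ : Form A P) : Form A P := .and (Form.imp φ ψ) (Form.imp ψ φ)
def Form.pdia {A P : Type} (φ : Form A P) : Form A P := .neg (.pbox (.neg φ))
def Form.lknow {A P : Type} (a : A) (φ : Form A P) : Form A P := .neg (.know a (.neg φ))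

/-- Validity on the class S5 of all epistemic models. -/
def Valid (A P : Type) (φ : Form A P) : Prop :=
  ∀ (M : EpiModel A P) (s : M.S), Sat M s φ


section McKinseyProof

variable {A P : Type}

/-- The "limit value" of a formula: its truth value with all modalities and
announcement machinery erased (truth in the singleton submodel). -/
def Bval (M : EpiModel A P) : Form A P → M.S → Prop
  | .atom p, t => t ∈ M.val p
  | .neg ψ, t => ¬ Bval M ψ t
  | .and ψ χ, t => Bval M ψ t ∧ Bval M χ t
  | .know _ ψ, t => Bval M ψ t
  | .ann α β, t => Bval M α t → Bval M β t
  | .pbox ψ, t => Bval M ψ t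

/-- A positive formula expressing `Bval φ` (for `true`) or its negation
(for `false`); it is a purely boolean (hence domain-independent) formula. -/
def polOf : Form A P → Bool → PosForm A P
  | .atom p, true => .atom p
  | .atom p, false => .natom p
  | .neg ψ, b => polOf ψ (!b)
  | .and ψ χ, true => .and (polOf ψ true) (polOf χ true)
  | .and ψ χ, false => .or (polOf ψ false) (polOf χ false)
  | .know _ ψ, b => polOf ψ b
  | .ann α β, true => .or (polOf α false) (polOf β true)
  | .ann α β, false => .and (polOf α true) (polOf β false)
  | .pbox ψ, b => polOf ψ b

theorem polOf_sat (M : EpiModel A P) (φ : Form A P) (D : Set M.S) (t : M.S) :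
    (PosForm.sat M (polOf φ true) D t ↔ Bval M φ t) ∧
    (PosForm.sat M (polOf φ false) D t ↔ ¬ Bval M φ t) := by
  induction φ with
  | atom p => simp [polOf, PosForm.sat, Bval]
  | neg ψ ih =>
      simp only [polOf, Bool.not_true, Bool.not_false, Bval]
      exact ⟨ih.2, by rw [ih.1]; exact not_not.symm⟩
  | and ψ χ ih1 ih2 =>
      simp only [polOf, PosForm.sat, Bval, ih1.1, ih1.2, ih2.1, ih2.2]
      constructor <;> tauto
  | know a ψ ih => simpa [polOf, Bval] using ih
  | ann α β ih1 ih2 =>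
      simp only [polOf, PosForm.sat, Bval, ih1.1, ih1.2, ih2.1, ih2.2]
      constructor
      · tauto
      · tauto
  | pbox ψ ih => simpa [polOf, Bval] using ih

/-- **Stabilization lemma.** For every formula φ and state s there is a positive
formula χ true at s such that on every subdomain E of the χ-restriction, the
truth value of φ at any point of E is the fixed boolean value `Bval φ`. -/
theorem stab (M : EpiModel A P) (φ : Form A P) (s : M.S) (D : Set M.S) :
    ∃ χ : PosForm A P, PosForm.sat M χ D s ∧
      ∀ (E : Set M.S) (t : M.S), t ∈ E →
        E ⊆ {u | u ∈ D ∧ PosForm.sat M χ D u} →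
        (Form.sat M φ E t ↔ Bval M φ t) := by
  induction φ generalizing D with
  | atom p =>
      refine ⟨.or (.atom p) (.natom p), ?_, ?_⟩
      · show PosForm.sat M (.atom p) D s ∨ PosForm.sat M (.natom p) D s
        exact Classical.em _
      · intro E t _ _
        simp only [Form.sat, Bval]
  | neg ψ ih =>
      obtain ⟨χ, hs, hst⟩ := ih D
      refine ⟨χ, hs, fun E t ht hE => ?_⟩
      simp only [Form.sat, Bval]
      exact not_congr (hst E t ht hE)
  | and ψ₁ ψ₂ ih1 ih2 =>
      obtain ⟨χ₁, hs1, h1⟩ := ih1 D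
      obtain ⟨χ₂, hs2, h2⟩ := ih2 D
      refine ⟨.and χ₁ χ₂, ⟨hs1, hs2⟩, ?_⟩
      intro E t ht hE
      have hE1 : E ⊆ {u | u ∈ D ∧ PosForm.sat M χ₁ D u} :=
        fun u hu => ⟨(hE hu).1, (hE hu).2.1⟩
      have hE2 : E ⊆ {u | u ∈ D ∧ PosForm.sat M χ₂ D u} :=
        fun u hu => ⟨(hE hu).1, (hE hu).2.2⟩
      simp only [Form.sat, Bval]
      exact and_congr (h1 E t ht hE1) (h2 E t ht hE2)
  | know a ψ ih =>
      obtain ⟨χ, hs, hst⟩ := ih D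
      by_cases hv : Bval M ψ s
      · refine ⟨.and χ (polOf ψ true), ⟨hs, (polOf_sat M ψ D s).1.mpr hv⟩, ?_⟩
        intro E t ht hE
        have hEχ : E ⊆ {u | u ∈ D ∧ PosForm.sat M χ D u} :=
          fun u hu => ⟨(hE hu).1, (hE hu).2.1⟩
        have hBt : ∀ u ∈ E, Bval M ψ u :=
          fun u hu => (polOf_sat M ψ D u).1.mp (hE hu).2.2
        simp only [Form.sat, Bval]
        exact iff_of_true
          (fun t' _ ht'E => (hst E t' ht'E hEχ).mpr (hBt t' ht'E)) (hBt t ht)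
      · refine ⟨.and χ (polOf ψ false), ⟨hs, (polOf_sat M ψ D s).2.mpr hv⟩, ?_⟩
        intro E t ht hE
        have hEχ : E ⊆ {u | u ∈ D ∧ PosForm.sat M χ D u} :=
          fun u hu => ⟨(hE hu).1, (hE hu).2.1⟩
        have hBt : ¬ Bval M ψ t := (polOf_sat M ψ D t).2.mp (hE ht).2.2
        simp only [Form.sat, Bval]
        exact iff_of_false
          (fun hall => hBt ((hst E t ht hEχ).mp (hall t ((M.equiv a).refl t) ht)))
          hBt
  | ann α β ih1 ih2 =>
      obtain ⟨χα, hsα, hstα⟩ := ih1 D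
      obtain ⟨χβ, hsβ, hstβ⟩ := ih2 D
      refine ⟨.and χα χβ, ⟨hsα, hsβ⟩, ?_⟩
      intro E t ht hE
      have hEα : E ⊆ {u | u ∈ D ∧ PosForm.sat M χα D u} :=
        fun u hu => ⟨(hE hu).1, (hE hu).2.1⟩
      have hEβ : E ⊆ {u | u ∈ D ∧ PosForm.sat M χβ D u} :=
        fun u hu => ⟨(hE hu).1, (hE hu).2.2⟩
      have hαt : Form.sat M α E t ↔ Bval M α t := hstα E t ht hEα
      simp only [Form.sat, Bval]
      by_cases hA : Bval M α t
      · have hsub : {u | u ∈ E ∧ Form.sat M α E u} ⊆ {u | u ∈ D ∧ PosForm.sat M χβ D u} :=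
          fun u hu => hEβ hu.1
        have htE' : t ∈ {u | u ∈ E ∧ Form.sat M α E u} := ⟨ht, hαt.mpr hA⟩
        have hβ := hstβ _ t htE' hsub
        constructor
        · intro h _; exact hβ.mp (h (hαt.mpr hA))
        · intro h _; exact hβ.mpr (h hA)
      · exact iff_of_true (fun hsat => (hA (hαt.mp hsat)).elim) (fun hB => (hA hB).elim)
  | pbox ψ ih =>
      obtain ⟨χ, hs, hst⟩ := ih D
      refine ⟨χ, hs, ?_⟩
      intro E t ht hE
      simp only [Form.sat, Bval]
      by_cases hb : Bval M ψ t
      · refine iff_of_true (fun χ'' h'' => ?_) hb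
        exact (hst {u | u ∈ E ∧ PosForm.sat M χ'' E u} t
          (show t ∈ {u | u ∈ E ∧ PosForm.sat M χ'' E u} from ⟨ht, h''⟩)
          (fun u hu => hE hu.1)).mpr hb
      · refine iff_of_false (fun hall => ?_) hb
        have htop : PosForm.sat M (.or (polOf ψ true) (polOf ψ false)) E t := by
          show PosForm.sat M (polOf ψ true) E t ∨ PosForm.sat M (polOf ψ false) E t
          rcases Classical.em (Bval M ψ t) with h | h
          · exact Or.inl ((polOf_sat M ψ E t).1.mpr h)
          · exact Or.inr ((polOf_sat M ψ E t).2.mpr h)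
        exact hb ((hst {u | u ∈ E ∧ PosForm.sat M (.or (polOf ψ true) (polOf ψ false)) E u} t
          (show t ∈ {u | u ∈ E ∧ PosForm.sat M (.or (polOf ψ true) (polOf ψ false)) E u} from
            ⟨ht, htop⟩)
          (fun u hu => hE hu.1)).mp (hall _ htop))

end McKinseyProof

/-- Arbitrary positive announcements have the McKinsey
property on S5: `□⁺◊⁺φ → ◊⁺□⁺φ` is valid for every φ ∈ L_PAPAL. -/
theorem pbox_mckinsey (A P : Type) (φ : Form A P) :
    Valid A P (Form.imp (.pbox (Form.pdia φ)) (Form.pdia (.pbox φ))) := by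
  intro M s
  obtain ⟨χ, hχ, hstab⟩ := stab M φ s Set.univ
  have hsC : s ∈ {t | t ∈ (Set.univ : Set M.S) ∧ PosForm.sat M χ Set.univ t} :=
    ⟨Set.mem_univ s, hχ⟩
  -- from the hypothesis □⁺◊⁺φ we extract the limit value of φ at s
  have key1 : Form.sat M (.pbox (Form.pdia φ)) Set.univ s → Bval M φ s := by
    intro h1
    have hpd := h1 χ hχ
    by_contra hnB
    simp only [Form.pdia, Form.sat] at hpd
    apply hpd
    intro χ'' h''
    intro hf
    exact hnB ((hstab {t | t ∈ {t | t ∈ (Set.univ : Set M.S) ∧ PosForm.sat M χ Set.univ t} ∧ PosForm.sat M χ'' {t | t ∈ (Set.univ : Set M.S) ∧ PosForm.sat M χ Set.univ t} t} s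
      (show s ∈ {t | t ∈ {t | t ∈ (Set.univ : Set M.S) ∧ PosForm.sat M χ Set.univ t} ∧ PosForm.sat M χ'' {t | t ∈ (Set.univ : Set M.S) ∧ PosForm.sat M χ Set.univ t} t} from ⟨hsC, h''⟩)
      (fun u hu => hu.1)).mp hf)
  -- conversely, the limit value being true yields ◊⁺□⁺φ (witness: χ itself)
  have key2 : Bval M φ s → Form.sat M (Form.pdia (.pbox φ)) Set.univ s := by
    intro hB
    simp only [Form.pdia, Form.sat]
    intro h3
    have hneg := h3 χ hχ
    apply hneg
    intro χ' hχ'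
    exact (hstab {t | t ∈ {t | t ∈ (Set.univ : Set M.S) ∧ PosForm.sat M χ Set.univ t} ∧ PosForm.sat M χ' {t | t ∈ (Set.univ : Set M.S) ∧ PosForm.sat M χ Set.univ t} t} s
      (show s ∈ {t | t ∈ {t | t ∈ (Set.univ : Set M.S) ∧ PosForm.sat M χ Set.univ t} ∧ PosForm.sat M χ' {t | t ∈ (Set.univ : Set M.S) ∧ PosForm.sat M χ Set.univ t} t} from ⟨hsC, hχ'⟩)
      (fun u hu => hu.1)).mpr hB
  show Sat M s _
  intro hcon
  have h1 : ¬¬ Form.sat M (.pbox (Form.pdia φ)) Set.univ s := hcon.1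
  have h2 : ¬ Form.sat M (Form.pdia (.pbox φ)) Set.univ s := hcon.2
  exact h2 (key2 (key1 (not_not.mp h1)))
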